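/- In a Lie algebra over a field of characteristic p > 2 satisfying the identities [x,y,[u,v],z]=0, [x,z,u^(p),v]=0, and [x,y,x^(p-1),y^(p-1),v]=0, for each positive integer k the identity [y,z_1,...,z_{2k},y^(p)] = 0 holds (left-normalized, y^(p) means y repeated p times). -/

import Mathlib

/-- Left-normalized Lie bracket: `lnb x [a₁,…,aₙ] = [[…[x,a₁],…],aₙ]`. -/
def lnb {L : Type*} [LieRing L] (x : L) (l : List L) : L :=
  l.foldl (fun a b => ⁅a, b⁆) x

/-!
Write `D = (ad y)^p`. In characteristic `p` it is a derivation, and the first two identities say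
that `[[L, L], [L, L]]` and `(ad u)^p [L, L]` are central. Consequently
`[D u, s₁, …, s_m, y]` is central, symmetric in `u, s₁, …, s_m`, and, since `ad y` commutes with
right multiplications modulo the centre, it changes sign when `u` and `s_m` are exchanged and
`s₁, …, s_{m-1}` reversed (for odd `m`); so it vanishes for odd `m`. The Leibniz rule for `D`
then shows that `D [y, z₁, …, z_n]` is central for all `n` and zero for even `n`, and
`[y, z₁, …, z_{2k}, y^(p)] = -D [y, z₁, …, z_{2k}]`.
-/

open LieAlgebra

section LieRing

variable {L : Type*} [LieRing L]

lemma lnb_nil (x : L) : lnb x [] = x := rfl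

lemma lnb_cons (x a : L) (l : List L) : lnb x (a :: l) = lnb ⁅x, a⁆ l := rfl

lemma lnb_append (x : L) (l₁ l₂ : List L) : lnb x (l₁ ++ l₂) = lnb (lnb x l₁) l₂ :=
  List.foldl_append

lemma lnb_concat (x a : L) (l : List L) : lnb x (l ++ [a]) = ⁅lnb x l, a⁆ := by
  rw [lnb_append]; rfl

lemma lnb_zero (l : List L) : lnb (0 : L) l = 0 := by
  induction l with
  | nil => rfl
  | cons a l ih => rwa [lnb_cons, zero_lie]

lemma lnb_add (x y : L) (l : List L) : lnb (x + y) l = lnb x l + lnb y l := by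
  induction l generalizing x y with
  | nil => rfl
  | cons a l ih => rw [lnb_cons, add_lie, ih]; rfl

lemma lie_lie_right_comm (x a b : L) : ⁅⁅x, a⁆, b⁆ = ⁅⁅x, b⁆, a⁆ + ⁅x, ⁅a, b⁆⁆ := by
  rw [leibniz_lie x a b, ← lie_skew a]; abel

def IsBracket (w : L) : Prop := ∃ a b : L, w = ⁅a, b⁆

lemma isBracket_lie (a b : L) : IsBracket ⁅a, b⁆ := ⟨a, b, rfl⟩

lemma IsBracket.lnb {w : L} (hw : IsBracket w) (l : List L) : IsBracket (lnb w l) := by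
  induction l generalizing w with
  | nil => exact hw
  | cons a l ih => exact ih (isBracket_lie w a)

end LieRing

section Field

variable {F : Type*} [Field F] {L : Type*} [LieRing L] [LieAlgebra F L]

lemma mem_center_iff_forall_lie_left {c : L} : c ∈ center F L ↔ ∀ t : L, ⁅c, t⁆ = 0 := by
  rw [LieModule.mem_maxTrivSubmodule]
  exact forall_congr' fun t => by rw [← lie_skew, neg_eq_zero]

lemma lie_eq_zero_of_mem_center_left {c : L} (hc : c ∈ center F L) (t : L) : ⁅c, t⁆ = 0 :=
  mem_center_iff_forall_lie_left.1 hc t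

lemma lie_eq_zero_of_mem_center_right {c : L} (hc : c ∈ center F L) (t : L) : ⁅t, c⁆ = 0 :=
  (LieModule.mem_maxTrivSubmodule F L L c).1 hc t

lemma lie_lnb_eq_zero_of_mem_center {c : L} (hc : c ∈ center F L) (l : List L) (v : L) :
    ⁅lnb c l, v⁆ = 0 := by
  cases l with
  | nil => exact lie_eq_zero_of_mem_center_left hc v
  | cons a l => rw [lnb_cons, lie_eq_zero_of_mem_center_left hc a, lnb_zero, zero_lie]

lemma eq_zero_of_eq_neg_of_two_ne_zero {M : Type*} [AddCommGroup M] [Module F M]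
    (h2 : (2 : F) ≠ 0) {x : M} (h : x = -x) : x = 0 := by
  have hx : (2 : F) • x = 0 := by rw [two_smul]; nth_rw 1 [h]; exact neg_add_cancel x
  exact (smul_eq_zero.1 hx).resolve_left h2

lemma lnb_replicate (x u : L) (n : ℕ) :
    lnb x (List.replicate n u) = ((-ad F L u) ^ n) x := by
  induction n generalizing x with
  | zero => rfl
  | succ n ih =>
    rw [List.replicate_succ, lnb_cons, ih, pow_succ, Module.End.mul_apply, LinearMap.neg_apply,
      ad_apply, lie_skew]

lemma ad_pow_succ_apply (y u : L) (n : ℕ) :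
    (ad F L y ^ (n + 1)) u = (ad F L y ^ n) ⁅y, u⁆ := by
  rw [pow_succ, Module.End.mul_apply, ad_apply]

lemma ad_pow_succ_apply' (y u : L) (n : ℕ) :
    (ad F L y ^ (n + 1)) u = ⁅y, (ad F L y ^ n) u⁆ := by
  rw [pow_succ', Module.End.mul_apply, ad_apply]

lemma ad_pow_apply_self {n : ℕ} (hn : n ≠ 0) (y : L) : (ad F L y ^ n) y = 0 := by
  obtain ⟨m, rfl⟩ := Nat.exists_eq_succ_of_ne_zero hn
  rw [ad_pow_succ_apply, lie_self, map_zero]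

lemma isBracket_ad_pow_apply {n : ℕ} (hn : n ≠ 0) (y u : L) : IsBracket ((ad F L y ^ n) u) := by
  obtain ⟨m, rfl⟩ := Nat.exists_eq_succ_of_ne_zero hn
  rw [ad_pow_succ_apply']
  exact isBracket_lie _ _

-- The binomial coefficients `p.choose i` with `0 < i < p` vanish in characteristic `p`.
lemma ad_pow_char_lie {p : ℕ} [CharP F p] (hp : p.Prime) (x a b : L) :
    (ad F L x ^ p) ⁅a, b⁆ = ⁅(ad F L x ^ p) a, b⁆ + ⁅a, (ad F L x ^ p) b⁆ := by
  rw [ad_pow_lie, Finset.sum_eq_add (p, 0) (0, p) (by simp [hp.ne_zero])]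
  · simp
  · rintro ⟨i, j⟩ hij hne
    rw [Finset.HasAntidiagonal.mem_antidiagonal] at hij
    have hdvd : p ∣ p.choose i :=
      hp.dvd_choose_self (by rintro rfl; simp_all) (by grind)
    rw [← Nat.cast_smul_eq_nsmul F, (CharP.cast_eq_zero_iff F p _).2 hdvd, zero_smul]
  · simp
  · simp

end Field

section CentralSecondDerived

variable {F : Type*} [Field F] {p : ℕ} {L : Type*} [LieRing L] [LieAlgebra F L]
  (hcm : ∀ a b c d : L, ⁅⁅a, b⁆, ⁅c, d⁆⁆ ∈ center F L)

include hcm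

lemma lie_mem_center_of_isBracket {u w : L} (hu : IsBracket u) (hw : IsBracket w) :
    ⁅u, w⁆ ∈ center F L := by
  obtain ⟨a, b, rfl⟩ := hu
  obtain ⟨c, d, rfl⟩ := hw
  exact hcm a b c d

lemma lie_lnb_sub_lnb_lie_mem_center (y : L) {c : L} (hc : IsBracket c) (t : List L) :
    ⁅y, lnb c t⁆ - lnb ⁅y, c⁆ t ∈ center F L := by
  induction t using List.reverseRecOn with
  | nil => rw [lnb_nil, lnb_nil, sub_self]; exact zero_mem _
  | append_singleton t a ih =>
    have h : ⁅y, lnb c (t ++ [a])⁆ - lnb ⁅y, c⁆ (t ++ [a])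
        = ⁅⁅y, lnb c t⁆ - lnb ⁅y, c⁆ t, a⁆ + ⁅lnb c t, ⁅y, a⁆⁆ := by
      rw [lnb_concat, lnb_concat, leibniz_lie, sub_lie]; abel
    rw [h, lie_eq_zero_of_mem_center_left ih, zero_add]
    exact lie_mem_center_of_isBracket hcm (hc.lnb t) (isBracket_lie y a)

lemma ad_pow_succ_lnb (y : L) {c : L} (hc : IsBracket c) (t : List L) (n : ℕ) :
    (ad F L y ^ (n + 1)) (lnb c t) = ⁅y, lnb ((ad F L y ^ n) c) t⁆ := by
  induction n generalizing c with
  | zero => rw [pow_one, pow_zero, ad_apply]; rfl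
  | succ n ih =>
    have hδ := lie_lnb_sub_lnb_lie_mem_center hcm y hc t
    rw [ad_pow_succ_apply y _ (n + 1), ← sub_add_cancel ⁅y, lnb c t⁆ (lnb ⁅y, c⁆ t), map_add,
      ad_pow_succ_apply y _ n, lie_eq_zero_of_mem_center_right hδ, map_zero, zero_add,
      ih (isBracket_lie y c), ← ad_pow_succ_apply]

lemma lie_lnb_ad_pow_self (hp : p ≠ 0) (y u : L) (t : List L) :
    ⁅lnb ((ad F L y ^ p) u) t, y⁆ = -(ad F L y ^ p) (lnb ⁅y, u⁆ t) := by
  obtain ⟨n, rfl⟩ := Nat.exists_eq_succ_of_ne_zero hp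
  rw [ad_pow_succ_lnb hcm y (isBracket_lie y u), ← ad_pow_succ_apply, lie_skew]

lemma lie_lnb_cons_cons_comm {w : L} (hw : IsBracket w) (a b : L) (l : List L) (v : L) :
    ⁅lnb w (a :: b :: l), v⁆ = ⁅lnb w (b :: a :: l), v⁆ := by
  rw [lnb_cons, lnb_cons, lnb_cons, lnb_cons, lie_lie_right_comm, lnb_add, add_lie,
    lie_lnb_eq_zero_of_mem_center (lie_mem_center_of_isBracket hcm hw (isBracket_lie a b)),
    add_zero]

lemma lie_lnb_perm {l₁ l₂ : List L} (h : l₁.Perm l₂) {w : L} (hw : IsBracket w) (v : L) :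
    ⁅lnb w l₁, v⁆ = ⁅lnb w l₂, v⁆ := by
  induction h generalizing w with
  | nil => rfl
  | cons a _ ih => exact ih (isBracket_lie w a)
  | swap a b l => exact lie_lnb_cons_cons_comm hcm hw b a l v
  | trans _ _ ih₁ ih₂ => exact (ih₁ hw).trans (ih₂ hw)

lemma lie_lnb_eq_neg_one_pow_smul {w c : L} (hw : IsBracket w) (hc : IsBracket c)
    (t : List L) : ⁅w, lnb c t⁆ = (-1 : ℤ) ^ t.length • ⁅lnb w t.reverse, c⁆ := by
  induction t using List.reverseRecOn generalizing w with
  | nil => simp [lnb_nil]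
  | append_singleton t a ih =>
    rw [lnb_concat, leibniz_lie,
      lie_eq_zero_of_mem_center_left (lie_mem_center_of_isBracket hcm hw (hc.lnb t)), zero_add,
      ← lie_skew, ih (isBracket_lie w a), List.length_append, List.length_singleton, pow_succ,
      mul_neg_one, neg_smul, List.reverse_append]
    rfl

end CentralSecondDerived

section CentralPPowers

variable {F : Type*} [Field F] {p : ℕ} {L : Type*} [LieRing L] [LieAlgebra F L]
  (hcm : ∀ a b c d : L, ⁅⁅a, b⁆, ⁅c, d⁆⁆ ∈ center F L)
  (hcp : ∀ u a b : L, (ad F L u ^ p) ⁅a, b⁆ ∈ center F L)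

include hcp

lemma ad_pow_apply_mem_center_of_isBracket (y : L) {c : L} (hc : IsBracket c) :
    (ad F L y ^ p) c ∈ center F L := by
  obtain ⟨a, b, rfl⟩ := hc
  exact hcp y a b

lemma lie_lnb_ad_pow_cons_comm [CharP F p] (hp : p.Prime) (y a b : L) (l : List L) (v : L) :
    ⁅lnb ((ad F L y ^ p) a) (b :: l), v⁆ = ⁅lnb ((ad F L y ^ p) b) (a :: l), v⁆ := by
  have h : ⁅(ad F L y ^ p) a, b⁆ = (ad F L y ^ p) ⁅a, b⁆ + ⁅(ad F L y ^ p) b, a⁆ := by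
    rw [ad_pow_char_lie hp, ← lie_skew a]; abel
  rw [lnb_cons, lnb_cons, h, lnb_add, add_lie, lie_lnb_eq_zero_of_mem_center (hcp y a b),
    zero_add]

include hcm

lemma lie_lnb_ad_pow_mem_center (hp : p ≠ 0) (y u : L) (l : List L) :
    ⁅lnb ((ad F L y ^ p) u) l, y⁆ ∈ center F L := by
  induction l using List.reverseRecOn with
  | nil =>
    obtain ⟨n, rfl⟩ := Nat.exists_eq_succ_of_ne_zero hp
    rw [lnb_nil, ← lie_skew, ← ad_pow_succ_apply' (F := F), ad_pow_succ_apply]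
    exact neg_mem (hcp y y u)
  | append_singleton l a ih =>
    rw [lnb_concat, lie_lie_right_comm, lie_eq_zero_of_mem_center_left ih, zero_add]
    exact lie_mem_center_of_isBracket hcm ((isBracket_ad_pow_apply hp y u).lnb l)
      (isBracket_lie a y)

lemma lie_lnb_ad_pow_lie_self (hp : p ≠ 0) (y a z : L) (l : List L) :
    ⁅lnb ((ad F L y ^ p) a) l, ⁅y, z⁆⁆ = -⁅lnb ((ad F L y ^ p) a) (l ++ [z]), y⁆ := by
  rw [leibniz_lie,
    lie_eq_zero_of_mem_center_left (lie_lnb_ad_pow_mem_center hcm hcp hp y a l) z, zero_add,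
    lnb_concat, lie_skew]

lemma lie_lnb_ad_pow_eq_zero_of_odd [CharP F p] (hp : p.Prime) (h2 : (2 : F) ≠ 0)
    (y u : L) {l : List L} (hl : Odd l.length) : ⁅lnb ((ad F L y ^ p) u) l, y⁆ = 0 := by
  obtain ⟨l, b, rfl⟩ : ∃ l' b, l = l' ++ [b] :=
    l.eq_nil_or_concat'.resolve_left (by rintro rfl; simp at hl)
  have hl : Even l.length := by
    rw [List.length_append, List.length_singleton, Nat.odd_add_one, Nat.not_odd_iff_even] at hl
    exact hl
  set D := ad F L y ^ p
  -- The bracket is symmetric in `u, l, b` (`hsymm`), while moving `ad y` through the chain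
  -- modulo the centre changes its sign when `u`, `b` are exchanged and `l` reversed (`hanti`).
  have hsymm : ⁅lnb (D u) (l ++ [b]), y⁆ = ⁅lnb (D b) (l.reverse ++ [u]), y⁆ := by
    rw [lie_lnb_perm hcm (List.perm_append_singleton b l) (isBracket_ad_pow_apply hp.ne_zero y u),
      lie_lnb_ad_pow_cons_comm hcp hp,
      lie_lnb_perm hcm ((l.reverse_perm.symm.cons u).trans (List.perm_append_singleton u _).symm)
        (isBracket_ad_pow_apply hp.ne_zero y b)]
  have hanti : ⁅lnb (D u) (l ++ [b]), y⁆ = -⁅lnb (D b) (l.reverse ++ [u]), y⁆ := calc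
    _ = -D (lnb ⁅y, u⁆ (l ++ [b])) := lie_lnb_ad_pow_self hcm hp.ne_zero y u _
    _ = -(⁅D (lnb ⁅y, u⁆ l), b⁆ + ⁅lnb ⁅y, u⁆ l, D b⁆) := by rw [lnb_concat, ad_pow_char_lie hp]
    _ = ⁅D b, lnb ⁅y, u⁆ l⁆ := by
      rw [lie_eq_zero_of_mem_center_left
        (ad_pow_apply_mem_center_of_isBracket hcp y ((isBracket_lie y u).lnb l)), zero_add,
        ← lie_skew, neg_neg]
    _ = ⁅lnb (D b) l.reverse, ⁅y, u⁆⁆ := by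
      rw [lie_lnb_eq_neg_one_pow_smul hcm (isBracket_ad_pow_apply hp.ne_zero y b)
        (isBracket_lie y u), hl.neg_one_pow, one_smul]
    _ = _ := lie_lnb_ad_pow_lie_self hcm hcp hp.ne_zero y b u _
  rw [hsymm] at hanti ⊢
  exact eq_zero_of_eq_neg_of_two_ne_zero h2 hanti

lemma lnb_cons_lie_ad_pow (hp : p ≠ 0) (y z a : L) (t : List L) :
    ⁅lnb y (z :: t), (ad F L y ^ p) a⁆
      = (-1 : ℤ) ^ t.length • ⁅lnb ((ad F L y ^ p) a) (t.reverse ++ [z]), y⁆ := by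
  rw [lnb_cons, ← lie_skew,
    lie_lnb_eq_neg_one_pow_smul hcm (isBracket_ad_pow_apply hp y a) (isBracket_lie y z),
    lie_lnb_ad_pow_lie_self hcm hcp hp, smul_neg, neg_neg]

lemma lnb_lie_ad_pow_mem_center (hp : p ≠ 0) (y a : L) (l : List L) :
    ⁅lnb y l, (ad F L y ^ p) a⁆ ∈ center F L := by
  cases l with
  | nil => rw [lnb_nil, ← lie_skew]; exact neg_mem (lie_lnb_ad_pow_mem_center hcm hcp hp y a [])
  | cons z t =>
    rw [lnb_cons_lie_ad_pow hcm hcp hp]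
    exact zsmul_mem (lie_lnb_ad_pow_mem_center hcm hcp hp y a _) _

lemma lnb_lie_ad_pow_eq_zero_of_odd [CharP F p] (hp : p.Prime) (h2 : (2 : F) ≠ 0) (y a : L)
    {l : List L} (hl : Odd l.length) : ⁅lnb y l, (ad F L y ^ p) a⁆ = 0 := by
  cases l with
  | nil => simp at hl
  | cons z t =>
    rw [lnb_cons_lie_ad_pow hcm hcp hp.ne_zero, lie_lnb_ad_pow_eq_zero_of_odd hcm hcp hp h2,
      smul_zero]
    simpa [Nat.odd_add_one] using hl

lemma ad_pow_lnb_self_mem_center [CharP F p] (hp : p.Prime) (y : L) (l : List L) :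
    (ad F L y ^ p) (lnb y l) ∈ center F L := by
  induction l using List.reverseRecOn with
  | nil => rw [lnb_nil, ad_pow_apply_self hp.ne_zero]; exact zero_mem _
  | append_singleton l a ih =>
    rw [lnb_concat, ad_pow_char_lie hp, lie_eq_zero_of_mem_center_left ih, zero_add]
    exact lnb_lie_ad_pow_mem_center hcm hcp hp.ne_zero y a l

lemma ad_pow_lnb_self_eq_zero_of_even [CharP F p] (hp : p.Prime) (h2 : (2 : F) ≠ 0) (y : L)
    {l : List L} (hl : Even l.length) : (ad F L y ^ p) (lnb y l) = 0 := by
  rcases l.eq_nil_or_concat' with rfl | ⟨l, a, rfl⟩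
  · exact ad_pow_apply_self hp.ne_zero y
  · rw [lnb_concat, ad_pow_char_lie hp,
      lie_eq_zero_of_mem_center_left (ad_pow_lnb_self_mem_center hcm hcp hp y l), zero_add,
      lnb_lie_ad_pow_eq_zero_of_odd hcm hcp hp h2]
    simpa [Nat.even_add_one] using hl

end CentralPPowers

theorem stmt10_general (F : Type) [Field F] (p : ℕ) (hp : 2 < p) [CharP F p]
    (L : Type) [LieRing L] [LieAlgebra F L]
    (hcm : ∀ x y u v z : L, ⁅⁅⁅x, y⁆, ⁅u, v⁆⁆, z⁆ = 0)
    (hcp : ∀ x z u v : L, lnb ⁅x, z⁆ (List.replicate p u ++ [v]) = 0)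
    (k : ℕ) (y : L) (z : ℕ → L) :
    lnb y ((List.ofFn fun i : Fin (2 * k) => z i) ++ List.replicate p y) = 0 := by
  have hprime : p.Prime := CharP.char_is_prime_of_two_le F p hp.le
  have hodd : Odd p := hprime.odd_of_ne_two hp.ne'
  have h2 : (2 : F) ≠ 0 := Ring.two_ne_zero (by rw [ringChar.eq F p]; exact hp.ne')
  have hcm' : ∀ a b c d : L, ⁅⁅a, b⁆, ⁅c, d⁆⁆ ∈ center F L := fun a b c d =>
    mem_center_iff_forall_lie_left.2 (hcm a b c d)
  have hcp' : ∀ u a b : L, (ad F L u ^ p) ⁅a, b⁆ ∈ center F L := fun u a b =>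
    mem_center_iff_forall_lie_left.2 fun v => by
      have h := hcp a b u v
      rwa [lnb_concat, lnb_replicate (F := F), hodd.neg_pow, LinearMap.neg_apply, neg_lie,
        neg_eq_zero] at h
  rw [lnb_append, lnb_replicate (F := F), hodd.neg_pow, LinearMap.neg_apply,
    ad_pow_lnb_self_eq_zero_of_even hcm' hcp' hprime h2 y (by simp), neg_zero]

/-- In a Lie algebra over a field of characteristic `p > 2` satisfying
`[x,y,[u,v],z] = 0`, `[x,z,u^(p),v] = 0` and `[x,y,x^(p-1),y^(p-1),v] = 0`,
for each `k ≥ 1` the identity `[y,z₁,…,z_{2k},y^(p)] = 0` holds. -/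
theorem stmt10 (F : Type) [Field F] (p : ℕ) (hp : 2 < p) [CharP F p]
    (L : Type) [LieRing L] [LieAlgebra F L]
    (hcm : ∀ x y u v z : L, ⁅⁅⁅x, y⁆, ⁅u, v⁆⁆, z⁆ = 0)
    (hcp : ∀ x z u v : L, lnb ⁅x, z⁆ (List.replicate p u ++ [v]) = 0)
    (hpp : ∀ x y v : L,
      lnb ⁅x, y⁆ (List.replicate (p - 1) x ++ List.replicate (p - 1) y ++ [v]) = 0)
    (k : ℕ) (hk : 1 ≤ k) (y : L) (z : ℕ → L) :
    lnb y ((List.ofFn fun i : Fin (2 * k) => z i) ++ List.replicate p y) = 0 :=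
  stmt10_general F p hp L hcm hcp k y z
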